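/- arXiv:2008.03265 — 3 statements merged into one kernel-verified Lean document; each statement's English description precedes it below -/
import Mathlib

section
/- The B₂ cluster recurrence is periodic with period 6: if a sequence (a_n) of nonzero field elements satisfies a_{n+1} a_{n-1} = 1 + a_n when n is odd and a_{n+1} a_{n-1} = 1 + a_n² when n is even, then a_{n+6} = a_n for all n. -/
/-- The B₂ cluster exchange relations are periodic with period 6. -/
theorem b2_cluster_period_six {K : Type*} [Field K] (a : ℤ → K)
    (hne : ∀ n, a n ≠ 0)
    (hodd : ∀ n : ℤ, Odd n → a (n + 1) * a (n - 1) = 1 + a n)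
    (heven : ∀ n : ℤ, Even n → a (n + 1) * a (n - 1) = 1 + (a n) ^ 2) :
    ∀ n : ℤ, a (n + 6) = a n := by
  intro n
  rcases Int.even_or_odd n with ⟨k, hk⟩ | ⟨k, hk⟩
  · -- n even
    have e2 := hodd (n + 1) ⟨k, by omega⟩
    have e3 := heven (n + 2) ⟨k + 1, by omega⟩
    have e4 := hodd (n + 3) ⟨k + 1, by omega⟩
    have e5 := heven (n + 4) ⟨k + 2, by omega⟩
    have e6 := hodd (n + 5) ⟨k + 2, by omega⟩
    rw [show n + 1 + 1 = n + 2 by ring, show n + 1 - 1 = n by ring] at e2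
    rw [show n + 2 + 1 = n + 3 by ring, show n + 2 - 1 = n + 1 by ring] at e3
    rw [show n + 3 + 1 = n + 4 by ring, show n + 3 - 1 = n + 2 by ring] at e4
    rw [show n + 4 + 1 = n + 5 by ring, show n + 4 - 1 = n + 3 by ring] at e5
    rw [show n + 5 + 1 = n + 6 by ring, show n + 5 - 1 = n + 4 by ring] at e6
    have hA : a (n + 4) * (a n * a (n + 1)) = (a n) ^ 2 + 1 + a (n + 1) := by
      apply mul_right_cancel₀ (hne (n + 2))
      linear_combination (a n * a (n + 1)) * e4 + a n * e3 + (a (n + 2) - a n) * e2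
    have hB : a (n + 5) * a (n + 1) = (a n) ^ 2 + 1 := by
      apply mul_right_cancel₀ (mul_ne_zero (mul_ne_zero (hne (n + 3)) (hne (n + 1)))
        (pow_ne_zero 2 (hne n)))
      linear_combination ((a (n + 1)) ^ 2 * (a n) ^ 2) * e5 +
        (a (n + 4) * a n * a (n + 1) + (a n) ^ 2 + 1 + a (n + 1)) * hA -
        (((a n) ^ 2 + 1) * (a n) ^ 2) * e3 -
        (((a n) ^ 2 + 1) * (a n * a (n + 2) + 1 + a (n + 1))) * e2
    apply mul_right_cancel₀ (mul_ne_zero (mul_ne_zero (hne (n + 4)) (hne n)) (hne (n + 1)))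
    linear_combination (a n * a (n + 1)) * e6 + a n * hB - a n * hA
  · -- n odd
    have e2 := heven (n + 1) ⟨k + 1, by omega⟩
    have e3 := hodd (n + 2) ⟨k + 1, by omega⟩
    have e4 := heven (n + 3) ⟨k + 2, by omega⟩
    have e5 := hodd (n + 4) ⟨k + 2, by omega⟩
    have e6 := heven (n + 5) ⟨k + 3, by omega⟩
    rw [show n + 1 + 1 = n + 2 by ring, show n + 1 - 1 = n by ring] at e2
    rw [show n + 2 + 1 = n + 3 by ring, show n + 2 - 1 = n + 1 by ring] at e3
    rw [show n + 3 + 1 = n + 4 by ring, show n + 3 - 1 = n + 2 by ring] at e4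
    rw [show n + 4 + 1 = n + 5 by ring, show n + 4 - 1 = n + 3 by ring] at e5
    rw [show n + 5 + 1 = n + 6 by ring, show n + 5 - 1 = n + 4 by ring] at e6
    have hA : a (n + 4) * (a n * (a (n + 1)) ^ 2) = (a n + 1) ^ 2 + (a (n + 1)) ^ 2 := by
      apply mul_right_cancel₀ (hne (n + 2))
      linear_combination (a n * (a (n + 1)) ^ 2) * e4 +
        (a n * (a (n + 3) * a (n + 1) + 1 + a (n + 2))) * e3 + (a (n + 2) - a n) * e2
    have hB : a (n + 5) * a (n + 1) = a n + 1 := by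
      apply mul_right_cancel₀ (mul_ne_zero (mul_ne_zero (hne (n + 3)) (hne n)) (hne (n + 1)))
      linear_combination (a n * (a (n + 1)) ^ 2) * e5 + hA -
        ((a n + 1) * a n) * e3 - (a n + 1) * e2
    apply mul_right_cancel₀ (mul_ne_zero (mul_ne_zero (hne (n + 4)) (hne n))
      (pow_ne_zero 2 (hne (n + 1))))
    linear_combination (a n * (a (n + 1)) ^ 2) * e6 +
      (a n * (a (n + 5) * a (n + 1) + a n + 1)) * hB - a n * hA
end

section
/- The G₂ cluster recurrence is periodic with period 8: if a sequence (a_n) of nonzero field elements satisfies a_{n+1} a_{n-1} = 1 + a_n when n is odd and a_{n+1} a_{n-1} = 1 + a_n³ when n is even, then a_{n+8} = a_n for all n. -/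
/-!
Writing `x = a 0`, `y = a 1`, the exchange relations determine `a 2, …, a 8` as Laurent
polynomials in `x, y` (the Laurent phenomenon for the cluster algebra of type G₂), and one
finds `a 8 = x`. Translating by an even integer preserves the relations, which gives
`a (n + 8) = a n` for even `n`; for odd `n` the relation centred at `n + 8` then coincides
with the one centred at `n`, except for its middle term.
-/

section

variable {K : Type*} [Field K]

structure IsG2ClusterSeq (a : ℤ → K) : Prop where
  ne_zero : ∀ n, a n ≠ 0
  odd_rel : ∀ n : ℤ, Odd n → a (n + 1) * a (n - 1) = 1 + a n
  even_rel : ∀ n : ℤ, Even n → a (n + 1) * a (n - 1) = 1 + a n ^ 3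

namespace IsG2ClusterSeq

variable {a : ℤ → K}

theorem comp_add_even (h : IsG2ClusterSeq a) {m : ℤ} (hm : Even m) :
    IsG2ClusterSeq (fun n => a (m + n)) where
  ne_zero n := h.ne_zero (m + n)
  odd_rel n hn := by
    simpa only [add_assoc, add_sub_assoc] using h.odd_rel (m + n) (hm.add_odd hn)
  even_rel n hn := by
    simpa only [add_assoc, add_sub_assoc] using h.even_rel (m + n) (hm.add hn)

theorem apply_eight (h : IsG2ClusterSeq a) : a 8 = a 0 := by
  have e1 := h.odd_rel 1 (by decide)
  have e2 := h.even_rel 2 (by decide)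
  have e3 := h.odd_rel 3 (by decide)
  have e4 := h.even_rel 4 (by decide)
  have e5 := h.odd_rel 5 (by decide)
  have e6 := h.even_rel 6 (by decide)
  have e7 := h.odd_rel 7 (by decide)
  norm_num at e1 e2 e3 e4 e5 e6 e7
  have hx := h.ne_zero 0
  have hy := h.ne_zero 1
  set x := a 0
  set y := a 1
  -- Each step cancels `a (k - 1) ≠ 0` from `a (k + 1) * a (k - 1)`; afterwards only the
  -- monomial denominators of the Laurent polynomials need to be nonzero.
  have b2 : a 2 = (1 + y) / x := mul_right_cancel₀ hx (by rw [e1]; field_simp)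
  have b3 : a 3 = (x ^ 3 + (1 + y) ^ 3) / (x ^ 3 * y) :=
    mul_right_cancel₀ hy (by rw [e2, b2]; field_simp)
  have b4 : a 4 = (x ^ 3 + (1 + y) ^ 2) / (x ^ 2 * y) :=
    mul_right_cancel₀ (h.ne_zero 2) (by rw [e3, b3, b2]; field_simp; ring)
  have b5 : a 5 = (x ^ 6 + (2 + 3 * y) * x ^ 3 + (1 + y) ^ 3) / (x ^ 3 * y ^ 2) :=
    mul_right_cancel₀ (h.ne_zero 3) (by rw [e4, b4, b3]; field_simp; ring)
  have b6 : a 6 = (x ^ 3 + 1 + y) / (x * y) :=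
    mul_right_cancel₀ (h.ne_zero 4) (by rw [e5, b5, b4]; field_simp; ring)
  have b7 : a 7 = (x ^ 3 + 1) / y :=
    mul_right_cancel₀ (h.ne_zero 5) (by rw [e6, b6, b5]; field_simp; ring)
  exact mul_right_cancel₀ (h.ne_zero 6) (by rw [e7, b7, b6]; field_simp; ring)

theorem apply_add_eight_of_even (h : IsG2ClusterSeq a) {n : ℤ} (hn : Even n) :
    a (n + 8) = a n := by
  simpa using (h.comp_add_even hn).apply_eight

theorem apply_add_eight (h : IsG2ClusterSeq a) (n : ℤ) : a (n + 8) = a n := by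
  rcases Int.even_or_odd n with hn | hn
  · exact h.apply_add_eight_of_even hn
  have next : a (n + 8 + 1) = a (n + 1) := by
    rw [add_right_comm]; exact h.apply_add_eight_of_even hn.add_one
  have prev : a (n + 8 - 1) = a (n - 1) := by
    rw [add_sub_right_comm]; exact h.apply_add_eight_of_even (hn.sub_odd odd_one)
  have := h.odd_rel (n + 8) (hn.add_even (by decide))
  rw [next, prev, h.odd_rel n hn] at this
  exact (add_left_cancel this).symm

end IsG2ClusterSeq

end

/-- The G₂ cluster exchange relations are periodic with period 8. -/
theorem g2_cluster_period_eight {K : Type*} [Field K] (a : ℤ → K)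
    (hne : ∀ n, a n ≠ 0)
    (hodd : ∀ n : ℤ, Odd n → a (n + 1) * a (n - 1) = 1 + a n)
    (heven : ∀ n : ℤ, Even n → a (n + 1) * a (n - 1) = 1 + (a n) ^ 3) :
    ∀ n : ℤ, a (n + 8) = a n :=
  IsG2ClusterSeq.apply_add_eight ⟨hne, hodd, heven⟩
end

section
/- Every point of the A₂ cluster variety lies in one of the five cluster torus charts: if (ϑ₁,…,ϑ₅) ∈ ℂ⁵ satisfies the five pentagon relations ϑ_iϑ_{i+2} = 1 + ϑ_{i+1} (indices mod 5) and not all ϑ_i are determined trivially, then there exists an index i such that both ϑ_i ≠ 0 and ϑ_{i+1} ≠ 0. -/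
/-! A zero coordinate forces its left neighbour to be nonzero, since ϑ_{i-1} ϑ_{i+1} = 1.
If moreover every nonzero coordinate were followed by a zero, then zero and nonzero
coordinates would alternate around the cycle, which is impossible as its length 5 is odd. -/

theorem ZMod.not_forall_add_one_iff_not_of_odd {n : ℕ} (hn : Odd n) (p : ZMod n → Prop) :
    ¬ ∀ i, p (i + 1) ↔ ¬ p i := by
  intro hp
  have parity : ∀ k : ℕ, p k ↔ (p 0 ↔ Even k) := by
    intro k
    induction k with
    | zero => simp
    | succ k ih => rw [Nat.cast_succ, hp, ih, Nat.even_add_one]; tauto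
  have := parity n
  rw [ZMod.natCast_self, iff_false_intro (Nat.not_even_iff_odd.mpr hn)] at this
  tauto

/-- Every point of the A₂ cluster variety lies in one of the five cluster torus
charts: if (ϑ_i) ∈ ℂ, indexed cyclically mod 5, satisfy the pentagon relations
ϑ_i ϑ_{i+2} = 1 + ϑ_{i+1}, then some pair of cyclically consecutive coordinates is
nonzero. -/
theorem a2_cluster_charts_cover (θ : ZMod 5 → ℂ)
    (h : ∀ i : ZMod 5, θ i * θ (i + 2) = 1 + θ (i + 1)) :
    ∃ i : ZMod 5, θ i ≠ 0 ∧ θ (i + 1) ≠ 0 := by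
  by_contra! hc
  have left_of_zero_ne_zero : ∀ i, θ (i + 1) = 0 → θ i ≠ 0 := by
    intro i hzero hi
    simpa [hi, hzero] using h i
  exact ZMod.not_forall_add_one_iff_not_of_odd (by decide) (fun i => θ i = 0)
    fun i => ⟨left_of_zero_ne_zero i, hc i⟩
end
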